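/- Let (X,ρ,W) be a hyperbolic space, C ⊆ X nonempty convex, (M,d) a metric space with the AFPP for nonexpansive mappings, δ : M → C nonexpansive, and T : (C × M)_∞ → (C × M)_∞ nonexpansive. Assume there is φ : (0,∞) → (0,∞) such that for all ε > 0 and all u ∈ M there exists x* ∈ C with ρ(δ(u), x*) ≤ φ(ε) and ρ(x*, T_u(x*)) ≤ ε. Then r_H(T) = 0, i.e., inf{d_∞(h, T(h)) : h ∈ (C×M)_∞} = 0. -/

import Mathlib

/-!
Fix `u` and a small `s = 1 - l > 0`. The map `x ↦ W(δ u, T_u x, l)` is an `l`-contraction of `C`,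
so its iterates `z_n` starting at `δ u` move by geometrically decreasing steps; for an approximate
fixed point `x*` of `T_u` they also stay within `ρ(δ u, x*) + ρ(x*, T_u x*) / s` of `x*`. As
`z_{n+1}` lies within `s · ρ(δ u, T_u z_n)` of `T_u z_n`, a late iterate `z_N` is an approximate
fixed point of `T_u`, with an error that does not depend on `u`. Since `u ↦ z_N` is nonexpansive, so
is `u ↦ P_2 (T (z_N, u))` on `M`; an approximate fixed point `u` of it, provided by the AFPP, makes
`(z_N, u)` an approximate fixed point of `T`.
-/

open Metric Set

/-- Krasnoselski-Mann iteration: x₀ := x, x_{n+1} := W(x_n, T(x_n), λ_n). -/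
def KM {X : Type*} (W : X → X → ℝ → X) (T : X → X) (lam : ℕ → ℝ) (x : X) : ℕ → X
  | 0 => x
  | n + 1 => W (KM W T lam x n) (T (KM W T lam x n)) (lam n)

/-- M has the approximate fixed point property for nonexpansive mappings. -/
def AFPP (M : Type*) [MetricSpace M] : Prop :=
  ∀ S : M → M, (∀ u v : M, dist (S u) (S v) ≤ dist u v) →
    sInf {r : ℝ | ∃ u : M, r = dist u (S u)} = 0

open Filter Topology

section

variable {X : Type*} {W : X → X → ℝ → X} {C : Set X} {a q : X} {f : X → X} {l : ℝ}

def IsWConvex (W : X → X → ℝ → X) (C : Set X) : Prop :=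
  ∀ x ∈ C, ∀ y ∈ C, ∀ l ∈ Icc (0:ℝ) 1, W x y l ∈ C

def anchoredIterate (W : X → X → ℝ → X) (a : X) (f : X → X) (l : ℝ) : ℕ → X
  | 0 => a
  | n + 1 => W a (f (anchoredIterate W a f l n)) l

lemma anchoredIterate_mem (hC : IsWConvex W C) (ha : a ∈ C) (hfC : MapsTo f C C)
    (hl : l ∈ Icc (0:ℝ) 1) : ∀ n, anchoredIterate W a f l n ∈ C
  | 0 => ha
  | n + 1 => hC _ ha _ (hfC (anchoredIterate_mem hC ha hfC hl n)) _ hl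

variable [MetricSpace X]

structure IsW1W4 (W : X → X → ℝ → X) : Prop where
  w1 : ∀ x y z : X, ∀ l ∈ Icc (0:ℝ) 1, dist z (W x y l) ≤ (1 - l) * dist z x + l * dist z y
  w4 : ∀ x y z w : X, ∀ l ∈ Icc (0:ℝ) 1,
    dist (W x z l) (W y w l) ≤ (1 - l) * dist x y + l * dist z w

lemma IsW1W4.dist_left_le (hW : IsW1W4 W) (hl : l ∈ Icc (0:ℝ) 1) (x y : X) :
    dist x (W x y l) ≤ l * dist x y := by
  simpa using hW.w1 x y x l hl

lemma IsW1W4.dist_right_le (hW : IsW1W4 W) (hl : l ∈ Icc (0:ℝ) 1) (x y : X) :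
    dist y (W x y l) ≤ (1 - l) * dist y x := by
  simpa using hW.w1 x y y l hl

local notation "z" => anchoredIterate W a f l

lemma dist_anchoredIterate_succ_le (hW : IsW1W4 W) (hC : IsWConvex W C) (ha : a ∈ C)
    (hfC : MapsTo f C C) (hf : ∀ x ∈ C, ∀ y ∈ C, dist (f x) (f y) ≤ dist x y)
    (hl : l ∈ Icc (0:ℝ) 1) : ∀ n, dist (z (n + 1)) (z n) ≤ l ^ (n + 1) * dist a (f a)
  | 0 => by simpa [anchoredIterate, dist_comm] using hW.dist_left_le hl a (f a)
  | n + 1 => by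
    have hmem := anchoredIterate_mem hC ha hfC hl
    calc dist (z (n + 2)) (z (n + 1)) ≤ l * dist (f (z (n + 1))) (f (z n)) := by
          simpa [anchoredIterate] using hW.w4 a a (f (z (n + 1))) (f (z n)) l hl
      _ ≤ l * (l ^ (n + 1) * dist a (f a)) := by
          gcongr
          · exact hl.1
          · exact (hf _ (hmem _) _ (hmem _)).trans
              (dist_anchoredIterate_succ_le hW hC ha hfC hf hl n)
      _ = l ^ (n + 2) * dist a (f a) := by ring

lemma dist_anchoredIterate_le (hW : IsW1W4 W) (hC : IsWConvex W C) (ha : a ∈ C)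
    (hfC : MapsTo f C C) (hf : ∀ x ∈ C, ∀ y ∈ C, dist (f x) (f y) ≤ dist x y)
    (hl : l ∈ Icc (0:ℝ) 1) (hl1 : l < 1) (hq : q ∈ C) :
    ∀ n, dist (z n) q ≤ dist a q + dist q (f q) / (1 - l)
  | 0 => le_add_of_nonneg_right (div_nonneg dist_nonneg (sub_nonneg.2 hl.2))
  | n + 1 => by
    -- `R` is chosen so that `(1 - l) R` absorbs the error `l · ρ(q, f q)` of one step
    set R := dist q (f q) / (1 - l)
    have hR : (1 - l) * R = dist q (f q) := mul_div_cancel₀ _ (sub_ne_zero.2 hl1.ne')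
    have ih := dist_anchoredIterate_le hW hC ha hfC hf hl hl1 hq n
    have hfz : dist q (f (z n)) ≤ dist q (f q) + (dist a q + R) := by
      linarith [dist_triangle q (f q) (f (z n)), hf q hq _ (anchoredIterate_mem hC ha hfC hl n),
        dist_comm q (z n)]
    have hlq : l * dist q (f q) ≤ dist q (f q) := mul_le_of_le_one_left dist_nonneg hl.2
    calc dist (z (n + 1)) q = dist q (W a (f (z n)) l) := dist_comm _ _
      _ ≤ (1 - l) * dist q a + l * dist q (f (z n)) := hW.w1 _ _ _ l hl
      _ ≤ (1 - l) * dist a q + l * (dist q (f q) + (dist a q + R)) := by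
          rw [dist_comm q a]; gcongr; exact hl.1
      _ ≤ dist a q + R := by linarith

lemma dist_anchoredIterate_apply_le (hW : IsW1W4 W) (hC : IsWConvex W C) (ha : a ∈ C)
    (hfC : MapsTo f C C) (hf : ∀ x ∈ C, ∀ y ∈ C, dist (f x) (f y) ≤ dist x y)
    (hl : l ∈ Icc (0:ℝ) 1) (hl1 : l < 1) (hq : q ∈ C) {b η : ℝ} (hb : dist a q ≤ b)
    (hη : dist q (f q) ≤ η) (n : ℕ) :
    dist (z n) (f (z n)) ≤ (l ^ (n + 1) + (1 - l)) * (2 * b + η) + η := by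
  have hR : (1 - l) * (dist q (f q) / (1 - l)) = dist q (f q) :=
    mul_div_cancel₀ _ (sub_ne_zero.2 hl1.ne')
  have hfa : dist a (f a) ≤ 2 * b + η := by
    linarith [dist_triangle4 a q (f q) (f a), hf q hq a ha, dist_comm q a]
  have hfz : dist (f (z n)) a ≤ 2 * b + η + dist q (f q) / (1 - l) := by
    linarith [dist_triangle4 (f (z n)) (f q) q a, dist_comm (f q) q, dist_comm q a,
      hf _ (anchoredIterate_mem hC ha hfC hl n) q hq,
      dist_anchoredIterate_le hW hC ha hfC hf hl hl1 hq n]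
  calc dist (z n) (f (z n)) ≤ dist (z n) (z (n + 1)) + dist (z (n + 1)) (f (z n)) :=
        dist_triangle _ _ _
    _ ≤ l ^ (n + 1) * dist a (f a) + (1 - l) * dist (f (z n)) a := by
        rw [dist_comm (z n)]
        exact add_le_add (dist_anchoredIterate_succ_le hW hC ha hfC hf hl n)
          ((dist_comm _ _).trans_le (hW.dist_right_le hl _ _))
    _ ≤ l ^ (n + 1) * (2 * b + η) + (1 - l) * (2 * b + η + dist q (f q) / (1 - l)) := by
        gcongr
        exact pow_nonneg hl.1 _
    _ = (l ^ (n + 1) + (1 - l)) * (2 * b + η) + dist q (f q) := by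
        rw [mul_add _ _ (_ / _), hR]; ring
    _ ≤ (l ^ (n + 1) + (1 - l)) * (2 * b + η) + η := by linarith

lemma dist_anchoredIterate_anchoredIterate_le (hW : IsW1W4 W) (hC : IsWConvex W C) {a' : X}
    {f' : X → X} (ha : a ∈ C) (ha' : a' ∈ C) (hfC : MapsTo f C C) (hf'C : MapsTo f' C C)
    (hl : l ∈ Icc (0:ℝ) 1) {D : ℝ} (haa' : dist a a' ≤ D)
    (hff' : ∀ x ∈ C, ∀ y ∈ C, dist x y ≤ D → dist (f x) (f' y) ≤ D) :
    ∀ n, dist (z n) (anchoredIterate W a' f' l n) ≤ D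
  | 0 => haa'
  | n + 1 => by
    have hn := hff' _ (anchoredIterate_mem hC ha hfC hl n) _
      (anchoredIterate_mem hC ha' hf'C hl n)
      (dist_anchoredIterate_anchoredIterate_le hW hC ha ha' hfC hf'C hl haa' hff' n)
    calc _ ≤ (1 - l) * dist a a' + l * dist (f (z n)) (f' (anchoredIterate W a' f' l n)) :=
          hW.w4 _ _ _ _ l hl
      _ ≤ (1 - l) * D + l * D :=
          add_le_add (mul_le_mul_of_nonneg_left haa' (sub_nonneg.2 hl.2))
            (mul_le_mul_of_nonneg_left hn hl.1)
      _ = D := by ring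

end

lemma exists_contraction_rate {K η : ℝ} (hK : 0 ≤ K) (hη : 0 < η) :
    ∃ l ∈ Icc (0:ℝ) 1, l < 1 ∧ (1 - l) * K ≤ η ∧ ∃ N : ℕ, l ^ (N + 1) * K < η := by
  have hKη : 0 < K + η := by linarith
  refine ⟨K / (K + η), ⟨by positivity, (div_le_one hKη).2 (by linarith)⟩,
    (div_lt_one hKη).2 (by linarith), ?_, ?_⟩
  · rw [one_sub_div hKη.ne', add_sub_cancel_left, div_mul_eq_mul_div, div_le_iff₀ hKη]
    nlinarith
  · have hlim := (tendsto_pow_atTop_nhds_zero_of_lt_one (by positivity)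
      ((div_lt_one hKη).2 (by linarith))).mul_const K
    rw [zero_mul] at hlim
    obtain ⟨N, hN⟩ := eventually_atTop.1 (hlim.eventually (gt_mem_nhds hη))
    exact ⟨N, hN (N + 1) N.le_succ⟩

lemma AFPP.exists_dist_lt {M : Type*} [MetricSpace M] [Nonempty M] (hM : AFPP M) {S : M → M}
    (hS : ∀ u v, dist (S u) (S v) ≤ dist u v) {ε : ℝ} (hε : 0 < ε) : ∃ u, dist u (S u) < ε := by
  obtain ⟨_, ⟨u, rfl⟩, hu⟩ :=
    Real.lt_sInf_add_pos ⟨_, Classical.arbitrary M, rfl⟩ hε (s := {r | ∃ u, r = dist u (S u)})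
  rw [hM S hS, zero_add] at hu
  exact ⟨u, hu⟩

lemma dist_apply_le_of_le {X M : Type*} [MetricSpace X] [MetricSpace M] {C : Set X}
    {T : X × M → X × M} (hT : ∀ p q : X × M, p.1 ∈ C → q.1 ∈ C → dist (T p) (T q) ≤ dist p q)
    {x y : X} {u v : M} (hx : x ∈ C) (hy : y ∈ C) {D : ℝ} (hxy : dist x y ≤ D)
    (huv : dist u v ≤ D) :
    dist (T (x, u)).1 (T (y, v)).1 ≤ D ∧ dist (T (x, u)).2 (T (y, v)).2 ≤ D := by
  rw [← max_le_iff, ← Prod.dist_eq]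
  exact (hT (x, u) (y, v) hx hy).trans (by rw [Prod.dist_eq]; exact max_le hxy huv)

theorem rH_eq_zero_of_uniform_approx_general {X M : Type*} [MetricSpace X] [MetricSpace M] [Nonempty M]
    (W : X → X → ℝ → X)
    (hW1 : ∀ x y z : X, ∀ l ∈ Set.Icc (0:ℝ) 1,
      dist z (W x y l) ≤ (1 - l) * dist z x + l * dist z y)
    (hW4 : ∀ x y z w : X, ∀ l ∈ Set.Icc (0:ℝ) 1,
      dist (W x z l) (W y w l) ≤ (1 - l) * dist x y + l * dist z w)
    (C : Set X)
    (hconv : ∀ x ∈ C, ∀ y ∈ C, ∀ l ∈ Set.Icc (0:ℝ) 1, W x y l ∈ C)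
    (hM : AFPP M)
    (δ : M → X) (hδC : ∀ u, δ u ∈ C)
    (hδne : ∀ u v : M, dist (δ u) (δ v) ≤ dist u v)
    (T : X × M → X × M)
    (hT1 : ∀ x ∈ C, ∀ u : M, (T (x, u)).1 ∈ C)
    (hTne : ∀ p q : X × M, p.1 ∈ C → q.1 ∈ C → dist (T p) (T q) ≤ dist p q)
    (φ : ℝ → ℝ)
    (hφ : ∀ ε > (0:ℝ), ∀ u : M, ∃ xstar ∈ C,
      dist (δ u) xstar ≤ φ ε ∧ dist xstar (T (xstar, u)).1 ≤ ε) :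
    sInf {r : ℝ | ∃ x ∈ C, ∃ u : M, r = dist (x, u) (T (x, u))} = 0 := by
  have hW : IsW1W4 W := ⟨hW1, hW4⟩
  obtain ⟨u₀⟩ := ‹Nonempty M›
  refine csInf_eq_of_forall_ge_of_forall_gt_exists_lt ⟨_, δ u₀, hδC u₀, u₀, rfl⟩
    (by rintro _ ⟨x, -, u, rfl⟩; exact dist_nonneg) fun ε hε => ?_
  have hη : 0 < ε / 3 := by positivity
  choose q hqC hδq hq using hφ (ε / 3) hη
  obtain ⟨l, hl, hl1, hlK, N, hN⟩ :=
    exists_contraction_rate (K := 2 * φ (ε / 3) + ε / 3)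
      (by linarith [dist_nonneg.trans (hδq u₀)]) hη
  have hTu (u : M) : MapsTo (fun x => (T (x, u)).1) C C := fun x hx => hT1 x hx u
  set z : M → X := fun u => anchoredIterate W (δ u) (fun x => (T (x, u)).1) l N
  have hzC (u : M) : z u ∈ C := anchoredIterate_mem hconv (hδC u) (hTu u) hl N
  have hz (u v : M) : dist (z u) (z v) ≤ dist u v :=
    dist_anchoredIterate_anchoredIterate_le hW hconv (hδC u) (hδC v) (hTu u) (hTu v) hl
      (hδne u v) (fun x hx y hy hxy => (dist_apply_le_of_le hTne hx hy hxy le_rfl).1) N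
  have hzT (u : M) : dist (z u) (T (z u, u)).1 < ε := by
    refine (dist_anchoredIterate_apply_le hW hconv (hδC u) (hTu u)
      (fun x hx y hy => (dist_apply_le_of_le hTne hx hy le_rfl (by simp)).1) hl hl1 (hqC u)
      (hδq u) (hq u) N).trans_lt ?_
    rw [add_mul]
    linarith
  obtain ⟨u, hu⟩ := hM.exists_dist_lt
    (fun u v => (dist_apply_le_of_le hTne (hzC u) (hzC v) (hz u v) le_rfl).2) hε
  exact ⟨_, ⟨z u, hzC u, u, rfl⟩, by rw [Prod.dist_eq]; exact max_lt (hzT u) hu⟩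

/-- If approximate fixed points of each T_u can be found at uniformly bounded distance
from δ(u), then r_H(T) = 0. -/
theorem rH_eq_zero_of_uniform_approx {X M : Type*} [MetricSpace X] [MetricSpace M] [Nonempty M]
    (W : X → X → ℝ → X)
    (hW1 : ∀ x y z : X, ∀ l ∈ Set.Icc (0:ℝ) 1,
      dist z (W x y l) ≤ (1 - l) * dist z x + l * dist z y)
    (hW2 : ∀ x y : X, ∀ l ∈ Set.Icc (0:ℝ) 1, ∀ l' ∈ Set.Icc (0:ℝ) 1,
      dist (W x y l) (W x y l') = |l - l'| * dist x y)
    (hW3 : ∀ x y : X, ∀ l ∈ Set.Icc (0:ℝ) 1, W x y l = W y x (1 - l))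
    (hW4 : ∀ x y z w : X, ∀ l ∈ Set.Icc (0:ℝ) 1,
      dist (W x z l) (W y w l) ≤ (1 - l) * dist x y + l * dist z w)
    (C : Set X) (hC : C.Nonempty)
    (hconv : ∀ x ∈ C, ∀ y ∈ C, ∀ l ∈ Set.Icc (0:ℝ) 1, W x y l ∈ C)
    (hM : AFPP M)
    (δ : M → X) (hδC : ∀ u, δ u ∈ C)
    (hδne : ∀ u v : M, dist (δ u) (δ v) ≤ dist u v)
    (T : X × M → X × M)
    (hT1 : ∀ x ∈ C, ∀ u : M, (T (x, u)).1 ∈ C)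
    (hTne : ∀ p q : X × M, p.1 ∈ C → q.1 ∈ C → dist (T p) (T q) ≤ dist p q)
    (φ : ℝ → ℝ) (hφpos : ∀ ε > (0:ℝ), 0 < φ ε)
    (hφ : ∀ ε > (0:ℝ), ∀ u : M, ∃ xstar ∈ C,
      dist (δ u) xstar ≤ φ ε ∧ dist xstar (T (xstar, u)).1 ≤ ε) :
    sInf {r : ℝ | ∃ x ∈ C, ∃ u : M, r = dist (x, u) (T (x, u))} = 0 :=
  rH_eq_zero_of_uniform_approx_general W hW1 hW4 C hconv hM δ hδC hδne T hT1 hTne φ hφ
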